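/- arXiv:0902.3265 — 2 statements merged into one kernel-verified Lean document; each statement's English description precedes it below -/
import Mathlib

section
/- Let G be a graph admitting a k-queue layout (with k ≥ 1). Let F be a subgraph of G each of whose connected components has radius at most r, and let H be the simple graph obtained from G by contracting each connected component of F into a single vertex (deleting any resulting loops and parallel edges). Then H admits an f_r(k)-queue layout, where f_r(k) = 2k·( ((2k)^{r+1} − 1)/(2k − 1) )². -/
open SimpleGraph MeasureTheory Filter

/-! ### Subdivisions -/

/-- A witness that the graph `H` is a subdivision of the graph `G`:  `H` is obtained from `G`
by replacing each edge `ab` of `G` by a path between (the copies of) `a` and `b` whose internal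
(division) vertices are new and pairwise distinct. -/
structure SubdivisionWitness {V : Type*} {W : Type*} (G : SimpleGraph V) (H : SimpleGraph W) where
  emb : V ↪ W
  path : ∀ ⦃a b : V⦄, G.Adj a b → H.Walk (emb a) (emb b)
  path_isPath : ∀ ⦃a b : V⦄ (h : G.Adj a b), (path h).IsPath
  path_symm : ∀ ⦃a b : V⦄ (h : G.Adj a b), path h.symm = (path h).reverse
  internal_new : ∀ ⦃a b : V⦄ (h : G.Adj a b) (x : V),
    emb x ∈ (path h).support → x = a ∨ x = b
  internally_disjoint : ∀ ⦃a b a' b' : V⦄ (h : G.Adj a b) (h' : G.Adj a' b'),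
    s(a, b) ≠ s(a', b') → ∀ w : W, w ∈ (path h).support → w ∈ (path h').support →
      ∃ x : V, emb x = w
  vert_cover : ∀ w : W,
    (∃ x : V, emb x = w) ∨ ∃ (a b : V) (h : G.Adj a b), w ∈ (path h).support
  edge_cover : ∀ e ∈ H.edgeSet, ∃ (a b : V) (h : G.Adj a b), e ∈ (path h).edges

/-- `H` is a subdivision of `G`. -/
def IsSubdivision {V W : Type*} (G : SimpleGraph V) (H : SimpleGraph W) : Prop :=
  Nonempty (SubdivisionWitness G H)

/-- `H` is a `(≤ t)`-subdivision of `G`: a subdivision with at most `t` division vertices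
per edge (i.e. each replacing path has length at most `t + 1`). -/
def IsLESubdivision {V W : Type*} (t : ℕ) (G : SimpleGraph V) (H : SimpleGraph W) : Prop :=
  ∃ S : SubdivisionWitness G H, ∀ ⦃a b : V⦄ (h : G.Adj a b), (S.path h).length ≤ t + 1

/-- `H` is the `t`-subdivision of `G`: exactly `t` division vertices on each edge. -/
def IsExactSubdivision {V W : Type*} (t : ℕ) (G : SimpleGraph V) (H : SimpleGraph W) : Prop :=
  ∃ S : SubdivisionWitness G H, ∀ ⦃a b : V⦄ (h : G.Adj a b), (S.path h).length = t + 1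

/-! ### Shallow topological minors and the top-grad -/

/-- `H` is a shallow topological minor of `G` at depth `d`:  some `(≤ 2d)`-subdivision of `H`
is isomorphic to a subgraph of `G`. -/
def IsShallowTopMinor {W V : Type*} (d : ℕ) (H : SimpleGraph W) (G : SimpleGraph V) : Prop :=
  ∃ (m : ℕ) (S : SimpleGraph (Fin m)),
    IsLESubdivision (2 * d) H S ∧ ∃ f : S →g G, Function.Injective f

/-- The topological greatest reduced average density (top-grad) `∇̃_d(G)` of rank `d`:
the maximum of `‖H‖/|H|` over all shallow topological minors `H` of `G` at depth `d`
with at least one vertex. -/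
noncomputable def topGrad {V : Type*} (d : ℕ) (G : SimpleGraph V) : ℝ :=
  sSup {q : ℝ | ∃ (m : ℕ) (H : SimpleGraph (Fin m)), 0 < m ∧
    IsShallowTopMinor d H G ∧ q = (Nat.card H.edgeSet : ℝ) / m}

/-! ### Shallow minors, the grad, and bounded expansion -/

/-- `H` is a shallow minor of `G` at depth `d`: it is obtained from `G` by contracting
pairwise disjoint connected subgraphs (branch sets) of radius at most `d` and taking
a simple subgraph of the result. -/
def IsShallowMinor {W V : Type*} (d : ℕ) (H : SimpleGraph W) (G : SimpleGraph V) : Prop :=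
  ∃ B : W → Set V,
    (∀ i, (B i).Nonempty) ∧
    (∀ i j, i ≠ j → Disjoint (B i) (B j)) ∧
    (∀ i : W, ∃ c : (B i), ∀ v : (B i), ∃ p : (G.induce (B i)).Walk c v, p.length ≤ d) ∧
    (∀ i j : W, H.Adj i j → ∃ u ∈ B i, ∃ v ∈ B j, G.Adj u v)

/-- The greatest reduced average density (grad) `∇_d(G)` of rank `d`. -/
noncomputable def grad {V : Type*} (d : ℕ) (G : SimpleGraph V) : ℝ :=
  sSup {q : ℝ | ∃ (m : ℕ) (H : SimpleGraph (Fin m)), 0 < m ∧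
    IsShallowMinor d H G ∧ q = (Nat.card H.edgeSet : ℝ) / m}

/-- A class of finite simple graphs, represented by graphs on `Fin n` for all `n`. -/
abbrev GraphClass := Set ((n : ℕ) × SimpleGraph (Fin n))

/-- A class of graphs has bounded expansion if `∇_d` is bounded on the class by a
function of `d`. -/
def BoundedExpansion (C : GraphClass) : Prop :=
  ∃ f : ℕ → ℝ, ∀ G ∈ C, ∀ d : ℕ, grad d G.2 ≤ f d

/-! ### Graph parameters -/

/-- A graph parameter is isomorphism-invariant. -/
def IsoInvariant (α : ((n : ℕ) × SimpleGraph (Fin n)) → ℝ) : Prop :=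
  ∀ G H : (n : ℕ) × SimpleGraph (Fin n), Nonempty (G.2 ≃g H.2) → α G = α H

/-- A graph parameter is strongly topological: `α(G)` and `α(H)` bound each other through a
fixed non-decreasing function, whenever `H` is a `(≤1)`-subdivision of `G`. -/
def StronglyTopological (α : ((n : ℕ) × SimpleGraph (Fin n)) → ℝ) : Prop :=
  ∃ f : ℝ → ℝ, Monotone f ∧ ∀ G H : (n : ℕ) × SimpleGraph (Fin n),
    IsLESubdivision 1 G.2 H.2 → α G ≤ f (α H) ∧ α H ≤ f (α G)

/-- A graph parameter is monotone: it does not increase when passing to a subgraph. -/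
def MonotoneParam (α : ((n : ℕ) × SimpleGraph (Fin n)) → ℝ) : Prop :=
  ∀ G H : (n : ℕ) × SimpleGraph (Fin n),
    (∃ f : H.2 →g G.2, Function.Injective f) → α H ≤ α G

/-- A graph parameter is degree-bound: every nonempty graph has a vertex of degree at most
`f(α(G))` for some fixed function `f`. -/
def DegreeBound (α : ((n : ℕ) × SimpleGraph (Fin n)) → ℝ) : Prop :=
  ∃ f : ℝ → ℝ, ∀ G : (n : ℕ) × SimpleGraph (Fin n), 0 < G.1 →
    ∃ v : Fin G.1, (Nat.card (G.2.neighborSet v) : ℝ) ≤ f (α G)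

/-! ### Queue and stack layouts -/

/-- A `k`-queue layout of `G` with respect to the linear order on `V`: an assignment of the
(potential) edges to `k` queues so that no two edges in a common queue are nested. -/
def IsQueueLayout {V : Type*} [LinearOrder V] (G : SimpleGraph V) (k : ℕ)
    (q : Sym2 V → Fin k) : Prop :=
  ∀ ⦃a b c d : V⦄, G.Adj a b → G.Adj c d → a < b → c < d →
    q s(a, b) = q s(c, d) → ¬(a < c ∧ d < b)

/-- The signed queue function `Q`:  `Q(v,w) = q(vw)` if `v < w` and `Q(v,w) = -q(vw)`
if `w < v` (queues are numbered `1,…,k`). -/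
def signedQueue {V : Type*} [LinearOrder V] {k : ℕ} (q : Sym2 V → Fin k) (v w : V) : ℤ :=
  if v < w then ((q s(v, w) : ℕ) : ℤ) + 1 else -(((q s(v, w) : ℕ) : ℤ) + 1)

/-- `G` admits a `k`-queue layout (for some vertex ordering). -/
def HasQueueLayout {V : Type*} (G : SimpleGraph V) (k : ℕ) : Prop :=
  ∃ (ord : LinearOrder V) (q : Sym2 V → Fin k), @IsQueueLayout V ord G k q

/-- A `k`-stack layout of `G` with respect to the linear order on `V`: an assignment of the
(potential) edges to `k` stacks so that no two edges in a common stack cross. -/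
def IsStackLayout {V : Type*} [LinearOrder V] (G : SimpleGraph V) (k : ℕ)
    (q : Sym2 V → Fin k) : Prop :=
  ∀ ⦃a b c d : V⦄, G.Adj a b → G.Adj c d → a < b → c < d →
    q s(a, b) = q s(c, d) → ¬(a < c ∧ c < b ∧ b < d)

/-- `G` admits a `k`-stack layout (for some vertex ordering). -/
def HasStackLayout {V : Type*} (G : SimpleGraph V) (k : ℕ) : Prop :=
  ∃ (ord : LinearOrder V) (q : Sym2 V → Fin k), @IsStackLayout V ord G k q

/-! ### Contracting the components of a subgraph -/

/-- The equivalence relation on `V(G)` identifying the vertices in a common connected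
component of the subgraph `F`. -/
def contractSetoid {V : Type*} {G : SimpleGraph V} (F : G.Subgraph) : Setoid V where
  r u v := u = v ∨ ∃ (hu : u ∈ F.verts) (hv : v ∈ F.verts),
    F.coe.Reachable ⟨u, hu⟩ ⟨v, hv⟩
  iseqv := by
    refine ⟨fun x => Or.inl rfl, ?_, ?_⟩
    · rintro x y (rfl | ⟨hx, hy, h⟩)
      · exact Or.inl rfl
      · exact Or.inr ⟨hy, hx, h.symm⟩
    · rintro x y z (rfl | ⟨hx, hy, h⟩) hyz
      · exact hyz
      · rcases hyz with (rfl | ⟨hy', hz, h'⟩)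
        · exact Or.inr ⟨hx, hy, h⟩
        · exact Or.inr ⟨hx, hz, h.trans h'⟩

/-- The simple graph obtained from `G` by contracting each connected component of the
subgraph `F` to a single vertex (deleting loops and parallel edges). -/
def contractGraph {V : Type*} {G : SimpleGraph V} (F : G.Subgraph) :
    SimpleGraph (Quotient (contractSetoid F)) where
  Adj A B := A ≠ B ∧ ∃ u v : V, G.Adj u v ∧
    Quotient.mk (contractSetoid F) u = A ∧ Quotient.mk (contractSetoid F) v = B
  symm := by
    refine ⟨?_⟩
    rintro A B ⟨hne, u, v, h, hu, hv⟩
    exact ⟨hne.symm, v, u, h.symm, hv, hu⟩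
  loopless := by
    refine ⟨?_⟩
    rintro A ⟨hne, -⟩
    exact hne rfl

/-! ### Non-repetitive and acyclic colourings -/

/-- A colouring `f` of `G` is non-repetitive if there is no path `v₀, …, v_{2s-1}` in `G`
(`s ≥ 1`, vertices pairwise distinct, consecutive vertices adjacent) with
`f(v_i) = f(v_{i+s})` for all `i < s`. -/
def NonRepColoring {V α : Type*} (G : SimpleGraph V) (f : V → α) : Prop :=
  ∀ s : ℕ, 0 < s → ∀ v : ℕ → V,
    (∀ i, i < 2 * s → ∀ j, j < 2 * s → i ≠ j → v i ≠ v j) →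
    (∀ i, i + 1 < 2 * s → G.Adj (v i) (v (i + 1))) →
    ¬(∀ i, i < s → f (v i) = f (v (i + s)))

/-- `π(G)`: the minimum number of colours in a non-repetitive colouring of `G`. -/
noncomputable def piNum {V : Type*} (G : SimpleGraph V) : ℕ :=
  sInf {k : ℕ | ∃ f : V → Fin k, NonRepColoring G f}

/-- A proper colouring of `G` with no bichromatic cycle (every cycle receives at least
three colours). -/
def AcyclicColoring {V α : Type*} (G : SimpleGraph V) (f : V → α) : Prop :=
  (∀ u w : V, G.Adj u w → f u ≠ f w) ∧
  ∀ (u : V) (c : G.Walk u u), c.IsCycle →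
    ∃ x ∈ c.support, ∃ y ∈ c.support, ∃ z ∈ c.support, f x ≠ f y ∧ f x ≠ f z ∧ f y ≠ f z

/-- `χₐ(G)`: the acyclic chromatic number of `G`. -/
noncomputable def chiA {V : Type*} (G : SimpleGraph V) : ℕ :=
  sInf {k : ℕ | ∃ f : V → Fin k, AcyclicColoring G f}

/-! ### The Erdős–Rényi random graph `G(n, p)` -/

/-- The Erdős–Rényi measure: each potential edge (coordinate) is present independently with
probability `p` (truncated to `[0,1]`). -/
noncomputable def erdosRenyi (n : ℕ) (p : ℝ) : Measure (Sym2 (Fin n) → Bool) :=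
  Measure.pi fun _ =>
    ((PMF.bernoulli (min (Real.toNNReal p) 1) (min_le_right _ _)).toMeasure)

/-- The simple graph on `Fin n` determined by an outcome `ω` of the edge indicators. -/
def graphOf {n : ℕ} (ω : Sym2 (Fin n) → Bool) : SimpleGraph (Fin n) where
  Adj u v := u ≠ v ∧ ω s(u, v) = true
  symm := by
    refine ⟨?_⟩
    rintro u v ⟨hne, h⟩
    exact ⟨hne.symm, by rwa [Sym2.eq_swap]⟩
  loopless := by
    refine ⟨?_⟩
    rintro u ⟨hne, -⟩
    exact hne rfl

/-!
Order the contracted classes by chosen centres, each at distance at most `r` from every vertex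
of its class. An edge `AB` of the contraction is realised by an edge `uv` of `G`, and is
coloured by the signed queue of `uv` together with the words of signed queues read along the
paths from the centres to `u` and to `v`; there are `2k · (1 + 2k + ⋯ + (2k)^r)²` colours.
Two vertex-disjoint paths with equal words preserve the order of their start vertices at every
step (an edge of a queue cannot nest another edge of the same queue). So if two edges `AB` and
`CD` with the same colour were nested, `A < C < D < B`, the paths to `u` and `u'` would give
`u < u'`, the common signed queue of `uv` and `u'v'` would give `v ≤ v'`, and the paths to `v'`
and `v` would give `v' < v`.
-/

namespace SimpleGraph

section QueueLayout

variable {V : Type*} [LinearOrder V] {G : SimpleGraph V} {k : ℕ} {q : Sym2 V → Fin k}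

/-- The paper's signed queue `Q(a, b)`, as a direction bit and a queue. -/
def dirQueue (q : Sym2 V → Fin k) (a b : V) : Bool × Fin k := (decide (a < b), q s(a, b))

theorem IsQueueLayout.le_of_dirQueue_eq (hq : IsQueueLayout G k q) {a b c d : V}
    (hab : G.Adj a b) (hcd : G.Adj c d) (hac : a < c) (h : dirQueue q a b = dirQueue q c d) :
    b ≤ d := by
  simp only [dirQueue, Prod.mk.injEq, decide_eq_decide] at h
  obtain ⟨hdir, hqueue⟩ := h
  rcases hab.ne.lt_or_gt with hab' | hba
  · exact not_lt.mp fun hdb => hq hab hcd hab' (hdir.mp hab') hqueue ⟨hac, hdb⟩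
  · have hdc : d < c := (not_lt.mp fun hcd' => hba.not_gt (hdir.mpr hcd')).lt_of_ne hcd.ne'
    rw [Sym2.eq_swap, Sym2.eq_swap (a := c)] at hqueue
    exact not_lt.mp fun hdb => hq hcd.symm hab.symm hdc hba hqueue.symm ⟨hdb, hac⟩

def Walk.queueWord (q : Sym2 V → Fin k) {a x : V} (p : G.Walk a x) : List (Bool × Fin k) :=
  p.darts.map fun d => dirQueue q d.fst d.snd

@[simp]
theorem Walk.queueWord_nil (q : Sym2 V → Fin k) {a : V} :
    (Walk.nil : G.Walk a a).queueWord q = [] :=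
  rfl

@[simp]
theorem Walk.queueWord_cons (q : Sym2 V → Fin k) {a b x : V} (h : G.Adj a b) (p : G.Walk b x) :
    (Walk.cons h p).queueWord q = dirQueue q a b :: p.queueWord q :=
  rfl

theorem Walk.length_queueWord (q : Sym2 V → Fin k) {a x : V} (p : G.Walk a x) :
    (p.queueWord q).length = p.length := by
  simp [Walk.queueWord]

theorem IsQueueLayout.lt_of_queueWord_eq (hq : IsQueueLayout G k q) {a a' x x' : V}
    (p : G.Walk a x) (p' : G.Walk a' x') (hdisj : p.support.Disjoint p'.support)
    (hword : p.queueWord q = p'.queueWord q) (ha : a < a') : x < x' := by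
  induction p generalizing a' with
  | nil => cases p' with
    | nil => exact ha
    | cons => simp at hword
  | @cons _ b _ h p ih => cases p' with
    | nil => simp at hword
    | @cons _ b' _ h' p' =>
      simp only [Walk.queueWord_cons, List.cons.injEq] at hword
      simp only [Walk.support_cons, List.disjoint_cons_left, List.disjoint_cons_right] at hdisj
      have hb : b ≠ b' := fun e => hdisj.2.2 p.start_mem_support (e ▸ p'.start_mem_support)
      exact ih p' hdisj.2.2 hword.2 ((hq.le_of_dirQueue_eq h h' ha hword.1).lt_of_ne hb)

theorem hasQueueLayout_of_card_le {α : Type*} [Fintype α] {K : ℕ} (hK : Fintype.card α ≤ K)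
    (col : Sym2 V → α) (hcol : ∀ ⦃a b c d : V⦄, G.Adj a b → G.Adj c d → a < b → c < d →
      col s(a, b) = col s(c, d) → ¬(a < c ∧ d < b)) :
    HasQueueLayout G K := by
  obtain ⟨e⟩ := Function.Embedding.nonempty_of_card_le (hK.trans_eq (Fintype.card_fin K).symm)
  exact ⟨inferInstance, e ∘ col, fun _ _ _ _ hab hcd hlt hlt' heq =>
    hcol hab hcd hlt hlt' (e.injective heq)⟩

end QueueLayout

/-- Words of length at most `r`, encoded as a sigma type so that they form a `Fintype`. -/
abbrev BoundedWord (α : Type*) (r : ℕ) := Σ m : Fin (r + 1), List.Vector α m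

namespace BoundedWord

variable {α : Type*} {r : ℕ}

def ofList (l : List α) (hl : l.length ≤ r) : BoundedWord α r :=
  ⟨⟨l.length, Nat.lt_succ_of_le hl⟩, ⟨l, rfl⟩⟩

theorem eq_of_ofList_eq {l l' : List α} {hl : l.length ≤ r} {hl' : l'.length ≤ r}
    (h : ofList l hl = ofList l' hl') : l = l' :=
  congrArg (fun w : BoundedWord α r => w.2.toList) h

theorem card [Fintype α] :
    Fintype.card (BoundedWord α r) = ∑ i ∈ Finset.range (r + 1), Fintype.card α ^ i := by
  simp [Fintype.card_sigma, card_vector, Fin.sum_univ_eq_sum_range (fun i => Fintype.card α ^ i)]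

end BoundedWord

section Centres

variable {V Q : Type*} {G : SimpleGraph V} {π : V → Q} {centre : Q → V}

theorem disjoint_support_of_ne (path : ∀ x, G.Walk (centre (π x)) x)
    (hpath : ∀ x, ∀ y ∈ (path x).support, π y = π x) {x x' : V} (h : π x ≠ π x') :
    (path x).support.Disjoint (path x').support :=
  fun _ hy hy' => h ((hpath x _ hy).symm.trans (hpath x' _ hy'))

variable [LinearOrder V] {k r : ℕ} {q : Sym2 V → Fin k}

theorem IsQueueLayout.false_of_nested (hq : IsQueueLayout G k q)
    (path : ∀ x, G.Walk (centre (π x)) x) (hpath : ∀ x, ∀ y ∈ (path x).support, π y = π x)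
    {u v u' v' : V} (huv : G.Adj u v) (huv' : G.Adj u' v')
    (hdir : dirQueue q u v = dirQueue q u' v')
    (hu : (path u).queueWord q = (path u').queueWord q)
    (hv : (path v).queueWord q = (path v').queueWord q)
    (hAC : centre (π u) < centre (π u')) (hDB : centre (π v') < centre (π v)) : False := by
  have hu_lt : u < u' :=
    hq.lt_of_queueWord_eq _ _ (disjoint_support_of_ne path hpath fun h => hAC.ne (h ▸ rfl)) hu hAC
  have hv'_lt : v' < v :=
    hq.lt_of_queueWord_eq _ _ (disjoint_support_of_ne path hpath fun h => hDB.ne (h ▸ rfl))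
      hv.symm hDB
  exact (hq.le_of_dirQueue_eq huv huv' hu_lt hdir).not_gt hv'_lt

theorem IsQueueLayout.hasQueueLayout_of_centres (hq : IsQueueLayout G k q) (H : SimpleGraph Q)
    (hcentre : ∀ A, π (centre A) = A) (path : ∀ x, G.Walk (centre (π x)) x)
    (hlen : ∀ x, (path x).length ≤ r) (hpath : ∀ x, ∀ y ∈ (path x).support, π y = π x)
    (hH : ∀ A B, H.Adj A B → ∃ u v, G.Adj u v ∧ π u = A ∧ π v = B) :
    HasQueueLayout H (2 * k * (∑ i ∈ Finset.range (r + 1), (2 * k) ^ i) ^ 2) := by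
  let _ : LinearOrder Q := LinearOrder.lift' centre (Function.LeftInverse.injective hcentre)
  have hedge : ∀ A B, ∃ e : V × V, H.Adj A B → G.Adj e.1 e.2 ∧ π e.1 = A ∧ π e.2 = B := by
    intro A B
    by_cases h : H.Adj A B
    · obtain ⟨u, v, huv⟩ := hH A B h
      exact ⟨(u, v), fun _ => huv⟩
    · exact ⟨(centre A, centre A), fun h' => absurd h' h⟩
  choose e he using hedge
  let word (x : V) : BoundedWord (Bool × Fin k) r :=
    .ofList ((path x).queueWord q) ((path x).length_queueWord q ▸ hlen x)
  let colour (A B : Q) := (dirQueue q (e A B).1 (e A B).2, word (e A B).1, word (e A B).2)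
  refine hasQueueLayout_of_card_le ?_ (fun s => colour s.inf s.sup) ?_
  · simp only [Fintype.card_prod, BoundedWord.card, Fintype.card_bool, Fintype.card_fin]
    exact le_of_eq (by ring)
  · intro A B C D hAB hCD hA hC heq ⟨hAC, hDB⟩
    simp only [Sym2.inf_mk, Sym2.sup_mk, inf_of_le_left hA.le, sup_of_le_right hA.le,
      inf_of_le_left hC.le, sup_of_le_right hC.le, colour, Prod.mk.injEq] at heq
    obtain ⟨huv, hu, hv⟩ := he A B hAB
    obtain ⟨huv', hu', hv'⟩ := he C D hCD
    refine hq.false_of_nested path hpath huv huv' heq.1 (BoundedWord.eq_of_ofList_eq heq.2.1)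
      (BoundedWord.eq_of_ofList_eq heq.2.2) ?_ ?_
    · rw [hu, hu']
      exact hAC
    · rw [hv, hv']
      exact hDB

end Centres

section Contraction

variable {V : Type*} {G : SimpleGraph V} {F : G.Subgraph}

theorem mk_contractSetoid_eq_of_reachable {a b : F.verts} (h : F.coe.Reachable a b) :
    Quotient.mk (contractSetoid F) a = Quotient.mk (contractSetoid F) b :=
  Quotient.sound (Or.inr ⟨a.2, b.2, h⟩)

theorem exists_centre_walk {r : ℕ} (hrad : ∀ u : F.verts, ∃ c : F.verts, ∀ x : F.verts,
      F.coe.Reachable u x → ∃ p : F.coe.Walk c x, p.length ≤ r)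
    (A : Quotient (contractSetoid F)) :
    ∃ c : V, Quotient.mk _ c = A ∧ ∀ x, Quotient.mk _ x = A →
      ∃ p : G.Walk c x, p.length ≤ r ∧ ∀ y ∈ p.support, Quotient.mk _ y = A := by
  classical
  induction A using Quotient.ind with | _ v
  by_cases hv : v ∈ F.verts
  · obtain ⟨c, hc⟩ := hrad ⟨v, hv⟩
    have hwalk : ∀ x, Quotient.mk (contractSetoid F) x = Quotient.mk _ v → ∃ p : G.Walk c x,
        p.length ≤ r ∧ ∀ y ∈ p.support, Quotient.mk (contractSetoid F) y = Quotient.mk _ v := by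
      intro x hx
      obtain ⟨hx', hreach⟩ : ∃ hx' : x ∈ F.verts, F.coe.Reachable ⟨v, hv⟩ ⟨x, hx'⟩ := by
        rcases Quotient.exact hx with rfl | ⟨hx', _, h⟩
        · exact ⟨hv, .refl _⟩
        · exact ⟨hx', h.symm⟩
      obtain ⟨w, hw⟩ := hc _ hreach
      refine ⟨w.map F.hom, (w.length_map F.hom).trans_le hw, fun y hy => ?_⟩
      obtain ⟨y', hy', rfl⟩ := List.mem_map.mp ((w.support_map F.hom) ▸ hy :)
      exact (mk_contractSetoid_eq_of_reachable (w.dropUntil y' hy').reachable).trans hx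
    refine ⟨c, ?_, hwalk⟩
    obtain ⟨p, -, hp⟩ := hwalk v rfl
    exact hp _ p.start_mem_support
  · refine ⟨v, rfl, fun x hx => ?_⟩
    rcases Quotient.exact hx with rfl | ⟨-, hv', -⟩
    · exact ⟨.nil, Nat.zero_le r, by simp⟩
    · exact absurd hv' hv

end Contraction

end SimpleGraph

theorem stmt_9_general {V : Type*} (G : SimpleGraph V) (k r : ℕ) (hk : 1 ≤ k)
    (hG : HasQueueLayout G k) (F : G.Subgraph)
    (hrad : ∀ u : F.verts, ∃ c : F.verts, ∀ x : F.verts,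
      F.coe.Reachable u x → ∃ p : F.coe.Walk c x, p.length ≤ r) :
    HasQueueLayout (contractGraph F)
      (2 * k * (((2 * k) ^ (r + 1) - 1) / (2 * k - 1)) ^ 2) := by
  obtain ⟨_, q, hq⟩ := hG
  choose centre hcentre hwalk using exists_centre_walk hrad
  choose path hlen hpath using fun x => hwalk _ x rfl
  rw [← Nat.geomSum_eq (by omega)]
  exact hq.hasQueueLayout_of_centres _ hcentre path hlen hpath fun A B h => h.2

/-- If `G` admits a `k`-queue layout (`k ≥ 1`), `F` is a subgraph of `G`
each of whose connected components has radius at most `r`, and `H` is obtained from `G` by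
contracting each component of `F` to a single vertex, then `H` admits an `f_r(k)`-queue
layout, where `f_r(k) = 2k·(((2k)^{r+1} − 1)/(2k − 1))²`. -/
theorem stmt_9 {V : Type*} [Fintype V] (G : SimpleGraph V) (k r : ℕ) (hk : 1 ≤ k)
    (hG : HasQueueLayout G k) (F : G.Subgraph)
    (hrad : ∀ u : F.verts, ∃ c : F.verts, ∀ x : F.verts,
      F.coe.Reachable u x → ∃ p : F.coe.Walk c x, p.length ≤ r) :
    HasQueueLayout (contractGraph F)
      (2 * k * (((2 * k) ^ (r + 1) - 1) / (2 * k - 1)) ^ 2) :=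
  stmt_9_general G k r hk hG F hrad
end

section
/- For every graph G: (a) π(H) ≤ π(G) + 1 for every (≤1)-subdivision H of G; (b) π(H) ≤ π(G) + 2 for every (≤2)-subdivision H of G; (c) π(H) ≤ π(G) + 3 for every subdivision H of G. -/
open SimpleGraph MeasureTheory Filter

/-!
Colour the branch vertices of `H` by an optimal non-repetitive colouring of `G`, and the division
vertices, in order along each edge path, by fresh colours following a word with no square on the
relevant length: a constant word when edges carry one division vertex, an alternating word when
they carry two, and the square-free ternary word derived from Thue–Morse in general.
A repetitive path of `H` through a branch vertex has its branch vertices placed symmetrically in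
its two halves, and these, in order, form a repetitive path of `G`; a repetitive path avoiding the
branch vertices stays inside one edge path, where its colours read a square of the word.
-/

def SquareFreeOn {α : Type*} (word : ℕ → α) (n : ℕ) : Prop :=
  ∀ a s, 0 < s → a + 2 * s ≤ n → ∃ i < s, word (a + i) ≠ word (a + i + s)

def thueMorse (n : ℕ) : Bool := (Nat.digits 2 n).sum % 2 == 1

@[simp]
lemma thueMorse_two_mul (n : ℕ) : thueMorse (2 * n) = thueMorse n := by
  rcases Nat.eq_zero_or_pos n with rfl | hn
  · rfl
  · simp [thueMorse, Nat.digits_def' (by norm_num : 1 < 2) (by omega : 0 < 2 * n)]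

@[simp]
lemma thueMorse_two_mul_add_one (n : ℕ) : thueMorse (2 * n + 1) = !thueMorse n := by
  simp only [thueMorse, Nat.digits_def' (by norm_num : 1 < 2) (by omega : 0 < 2 * n + 1),
    List.sum_cons, show (2 * n + 1) % 2 = 1 by omega, show (2 * n + 1) / 2 = n by omega]
  rcases Nat.mod_two_eq_zero_or_one (Nat.digits 2 n).sum with h | h <;> simp [Nat.add_mod, h]

lemma thueMorse_succ_of_even {n : ℕ} (hn : Even n) : thueMorse (n + 1) = !thueMorse n := by
  obtain ⟨m, rfl⟩ := hn
  rw [← two_mul, thueMorse_two_mul, thueMorse_two_mul_add_one]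

theorem thueMorse_overlapFree (p a : ℕ) (hp : 0 < p) :
    ∃ i ≤ p, thueMorse (a + i) ≠ thueMorse (a + i + p) := by
  induction p using Nat.strong_induction_on generalizing a with
  | _ p ih =>
  by_contra! hov
  rcases Nat.even_or_odd p with ⟨q, rfl⟩ | hodd
  · -- Restricting to the positions of the parity of `a` halves the period.
    obtain ⟨b, hb⟩ := Nat.even_or_odd' a
    obtain ⟨j, hj, hne⟩ := ih q (by omega) b (by omega)
    have h := hov (2 * j) (by omega)
    rcases hb with rfl | rfl
    · rw [show 2 * b + 2 * j = 2 * (b + j) by ring,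
        show 2 * (b + j) + (q + q) = 2 * (b + j + q) by ring] at h
      simp_all
    · rw [show 2 * b + 1 + 2 * j = 2 * (b + j) + 1 by ring,
        show 2 * (b + j) + 1 + (q + q) = 2 * (b + j + q) + 1 by ring] at h
      simp_all
  · -- An odd period forces the letters to alternate, so `thueMorse (a + p) ≠ thueMorse a`.
    have alt : ∀ n, a ≤ n → n < a + p → thueMorse (n + 1) = !thueMorse n := by
      intro n hn hnp
      rcases Nat.even_or_odd n with hn' | hn'
      · exact thueMorse_succ_of_even hn'
      · have h1 := hov (n - a) (by omega)
        have h2 := hov (n - a + 1) (by omega)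
        rw [show a + (n - a) = n by omega] at h1
        rw [show a + (n - a + 1) = n + 1 by omega, show n + 1 + p = n + p + 1 by ring] at h2
        rw [h1, h2, thueMorse_succ_of_even (hn'.add_odd hodd)]
    have parity : ∀ j ≤ p, thueMorse (a + j) = if Even j then thueMorse a else !thueMorse a := by
      intro j hj
      induction j with
      | zero => simp
      | succ j ihj =>
        rw [← add_assoc, alt _ (by omega) (by omega), ihj (by omega)]
        by_cases he : Even j <;> simp [he, Nat.even_add_one]
    have := hov 0 (by omega)
    rw [add_zero, parity p le_rfl, if_neg (Nat.not_even_iff_odd.mpr hodd)] at this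
    simp at this

def ternaryThueMorse (n : ℕ) : Fin 3 :=
  ⟨1 + (thueMorse (n + 1)).toNat - (thueMorse n).toNat, by
    have := Bool.toNat_le (thueMorse (n + 1)); omega⟩

lemma ternaryThueMorse_eq_iff {m n : ℕ} : ternaryThueMorse m = ternaryThueMorse n ↔
    (thueMorse (m + 1)).toNat + (thueMorse n).toNat
      = (thueMorse (n + 1)).toNat + (thueMorse m).toNat := by
  have := Bool.toNat_le (thueMorse m)
  have := Bool.toNat_le (thueMorse n)
  simp only [ternaryThueMorse, Fin.ext_iff]
  omega

/-- A square in the difference word of Thue–Morse lifts to an overlap in Thue–Morse. -/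
theorem squareFreeOn_ternaryThueMorse (n : ℕ) : SquareFreeOn ternaryThueMorse n := by
  intro a s hs _
  by_contra! hsq
  have hb : ∀ n, (thueMorse n).toNat ≤ 1 := fun n => Bool.toNat_le _
  have hdiff : ∀ i ≤ s, (thueMorse (a + s + i)).toNat + (thueMorse a).toNat
      = (thueMorse (a + i)).toNat + (thueMorse (a + s)).toNat := by
    intro i hi
    induction i with
    | zero => simp [add_comm]
    | succ i ih =>
      have := ternaryThueMorse_eq_iff.mp (hsq i (by omega))
      rw [show a + i + s = a + s + i by ring] at this
      have := ih (by omega)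
      simp only [← add_assoc]
      omega
  -- The constant difference is read at `i = 0` and at `i = s`; if it were `±1`, the letter at
  -- `a + s` would have to be both `0` and `1`.
  have hshift : (thueMorse (a + s)).toNat = (thueMorse a).toNat := by
    have := hdiff s le_rfl
    have := hb (a + s + s)
    have := hb a
    have := hb (a + s)
    omega
  obtain ⟨i, hi, hne⟩ := thueMorse_overlapFree s a hs
  have htoNat : ∀ x y : Bool, x.toNat = y.toNat → x = y := by decide
  apply hne
  have := hdiff i hi
  rw [show a + i + s = a + s + i by ring]
  exact htoNat _ _ (by omega)

lemma eq_add_or_add_eq_of_step {u : ℕ → ℕ} {n : ℕ}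
    (hstep : ∀ i, i + 1 < n → u (i + 1) = u i + 1 ∨ u i = u (i + 1) + 1)
    (hinj : ∀ i < n, ∀ j < n, u i = u j → i = j) :
    (∀ i < n, u i = u 0 + i) ∨ (∀ i < n, u i + i = u 0) := by
  have hsame : ∀ i, i + 1 + 1 < n →
      (u (i + 1) = u i + 1 ↔ u (i + 1 + 1) = u (i + 1) + 1) := by
    intro i hi
    have := hstep i (by omega)
    have := hstep (i + 1) hi
    have : u i ≠ u (i + 1 + 1) := fun h => absurd (hinj i (by omega) _ hi h) (by omega)
    omega
  rcases Nat.lt_or_ge n 2 with hn | hn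
  · left
    intro i hi
    obtain rfl : i = 0 := by omega
    rfl
  have key : ∀ i, i + 1 < n → (u (i + 1) = u i + 1 ↔ u 1 = u 0 + 1) := by
    intro i hi
    induction i with
    | zero => rfl
    | succ i ih => rw [← hsame i hi, ih (by omega)]
  obtain hup | hdown : u 1 = u 0 + 1 ∨ u 0 = u 1 + 1 := hstep 0 (by omega)
  · left
    intro i hi
    induction i with
    | zero => rfl
    | succ i ih => have := (key i hi).mpr hup; have := ih (by omega); omega
  · right
    intro i hi
    induction i with
    | zero => rfl
    | succ i ih =>
      have := key i hi
      have := hstep i hi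
      have := ih (by omega)
      omega

lemma SquareFreeOn.exists_ne_of_step {α : Type*} {word : ℕ → α} {n s : ℕ}
    (hword : SquareFreeOn word n) (hs : 0 < s) {u : ℕ → ℕ}
    (hstep : ∀ i, i + 1 < 2 * s → u (i + 1) = u i + 1 ∨ u i = u (i + 1) + 1)
    (hinj : ∀ i < 2 * s, ∀ j < 2 * s, u i = u j → i = j) (hlt : ∀ i < 2 * s, u i < n) :
    ∃ i < s, word (u i) ≠ word (u (i + s)) := by
  have hlast := hlt (2 * s - 1) (by omega)
  rcases eq_add_or_add_eq_of_step hstep hinj with hup | hdown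
  · have := hup (2 * s - 1) (by omega)
    obtain ⟨i, hi, hne⟩ := hword (u 0) s hs (by omega)
    refine ⟨i, hi, ?_⟩
    rwa [hup i (by omega), hup (i + s) (by omega), ← add_assoc]
  · -- Read the square backwards from its last letter.
    have hu := hdown (2 * s - 1) (by omega)
    have := hlt 0 (by omega)
    obtain ⟨i, hi, hne⟩ := hword (u (2 * s - 1)) s hs (by omega)
    refine ⟨s - 1 - i, by omega, fun h => hne ?_⟩
    have h1 := hdown (s - 1 - i) (by omega)
    have h2 := hdown (s - 1 - i + s) (by omega)
    rw [show u (2 * s - 1) + i = u (s - 1 - i + s) by omega,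
      show u (s - 1 - i + s) + s = u (s - 1 - i) by omega]
    exact h.symm

section Periodic

variable {Q : ℕ → Prop} {s : ℕ}

lemma Function.Periodic.count_add [DecidablePred Q] (hQ : Function.Periodic Q s) (n : ℕ) :
    Nat.count Q (s + n) = Nat.count Q s + Nat.count Q n := by
  rw [Nat.count_add]
  congr 2
  funext k
  rw [add_comm, hQ k]

lemma Function.Periodic.infinite_ofPred (hQ : Function.Periodic Q s) (hs : 0 < s) {i : ℕ}
    (hi : Q i) : (Set.ofPred Q).Infinite := by
  refine Set.infinite_of_not_bddAbove fun ⟨B, hB⟩ => ?_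
  have hmem : Q (i + (B + 1) * s) := by
    rwa [← Nat.cast_id (B + 1), hQ.nat_mul (B + 1) i]
  have := hB hmem
  have := Nat.le_mul_of_pos_right (B + 1) hs
  omega

lemma Function.Periodic.nth_add_count [DecidablePred Q] (hQ : Function.Periodic Q s)
    (hinf : (Set.ofPred Q).Infinite) (j : ℕ) :
    Nat.nth Q (j + Nat.count Q s) = Nat.nth Q j + s := by
  have hQj : Q (s + Nat.nth Q j) := by rw [add_comm, hQ]; exact Nat.nth_mem_of_infinite hinf j
  calc Nat.nth Q (j + Nat.count Q s) = Nat.nth Q (Nat.count Q (s + Nat.nth Q j)) := by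
        rw [hQ.count_add, Nat.count_nth_of_infinite hinf, add_comm]
    _ = Nat.nth Q j + s := by rw [Nat.nth_count hQj, add_comm]

end Periodic

/-- The increasing enumeration of `P` on `[0, 2s)` is that of its periodic extension
`P (i % s)`. -/
lemma exists_enum_of_shift_invariant {P : ℕ → Prop} {s : ℕ}
    (hsym : ∀ i < s, P i ↔ P (i + s)) (hex : ∃ i < 2 * s, P i) :
    ∃ r, 0 < r ∧ ∃ q : ℕ → ℕ, StrictMono q ∧ (∀ j < 2 * r, q j < 2 * s ∧ P (q j)) ∧
      (∀ j, q (j + r) = q j + s) ∧ ∀ j p, q j < p → p < q (j + 1) → p < 2 * s → ¬ P p := by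
  classical
  obtain ⟨i₀, hi₀, hPi₀⟩ := hex
  have hs : 0 < s := by omega
  set Q : ℕ → Prop := fun i => P (i % s)
  have hQ : Function.Periodic Q s := fun i => by simp only [Q, Nat.add_mod_right]
  have hQP : ∀ i < 2 * s, Q i ↔ P i := by
    intro i hi
    rcases Nat.lt_or_ge i s with h | h
    · simp only [Q, Nat.mod_eq_of_lt h]
    · have h' := hsym (i - s) (by omega)
      rw [Nat.sub_add_cancel h] at h'
      simp only [Q]
      rwa [Nat.mod_eq_sub_mod h, Nat.mod_eq_of_lt (by omega)]
  have hinf := hQ.infinite_ofPred hs ((hQP i₀ hi₀).mpr hPi₀)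
  refine ⟨Nat.count Q s, ?_, Nat.nth Q, Nat.nth_strictMono hinf, fun j hj => ?_,
    hQ.nth_add_count hinf, fun j p hjp hpj hp hPp => ?_⟩
  · have hQ₀ : Q (i₀ % s) := by simpa [Q] using (hQP i₀ hi₀).mpr hPi₀
    exact Nat.pos_of_ne_zero (Nat.count_ne_iff_exists.mpr ⟨_, Nat.mod_lt _ hs, hQ₀⟩)
  · have hlt : Nat.nth Q j < 2 * s :=
      Nat.nth_lt_of_lt_count (by rw [two_mul, hQ.count_add]; omega)
    exact ⟨hlt, (hQP _ hlt).mp (Nat.nth_mem_of_infinite hinf j)⟩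
  · exact absurd (Nat.le_nth_of_lt_nth_succ hpj ((hQP p hp).mpr hPp)) (by omega)

structure IsRepetitivePath {V α : Type*} (G : SimpleGraph V) (f : V → α) (s : ℕ) (v : ℕ → V) :
    Prop where
  half_pos : 0 < s
  injOn : ∀ i < 2 * s, ∀ j < 2 * s, i ≠ j → v i ≠ v j
  adj : ∀ i, i + 1 < 2 * s → G.Adj (v i) (v (i + 1))
  rep : ∀ i < s, f (v i) = f (v (i + s))

section NonRepColoring

variable {V α β : Type*} {G : SimpleGraph V}

lemma nonRepColoring_iff {f : V → α} : NonRepColoring G f ↔ ∀ s v, ¬ IsRepetitivePath G f s v :=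
  ⟨fun h s v hv => h s hv.half_pos v hv.injOn hv.adj hv.rep,
    fun h s hs v hinj hadj hrep => h s v ⟨hs, hinj, hadj, hrep⟩⟩

lemma NonRepColoring.comp_injective {f : V → α} {g : α → β} (hf : NonRepColoring G f)
    (hg : Function.Injective g) : NonRepColoring G (g ∘ f) :=
  fun s hs v hinj hadj hrep => hf s hs v hinj hadj fun i hi => hg (hrep i hi)

lemma nonRepColoring_of_injective {f : V → α} (hf : Function.Injective f) : NonRepColoring G f :=
  fun s hs v hinj _ hrep =>
    hinj 0 (by omega) s (by omega) (by omega) (hf (by simpa using hrep 0 hs))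

lemma piNum_le_of_nonRepColoring {k : ℕ} {f : V → Fin k} (hf : NonRepColoring G f) :
    piNum G ≤ k :=
  Nat.sInf_le ⟨f, hf⟩

lemma exists_nonRepColoring_fin_piNum [Finite V] (G : SimpleGraph V) :
    ∃ f : V → Fin (piNum G), NonRepColoring G f := by
  obtain ⟨n, ⟨e⟩⟩ := Finite.exists_equiv_fin V
  exact Nat.sInf_mem (⟨n, e, nonRepColoring_of_injective e.injective⟩ :
    {k | ∃ f : V → Fin k, NonRepColoring G f}.Nonempty)

end NonRepColoring

lemma List.idxOf_succ_of_infix {α : Type*} [DecidableEq α] {l : List α} {x y : α}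
    (hl : l.Nodup) (h : [x, y] <:+: l) : l.idxOf y = l.idxOf x + 1 := by
  obtain ⟨l₁, l₂, rfl⟩ := h
  grind

lemma List.idxOf_pos_of_ne {α : Type*} [DecidableEq α] {l : List α} {w : α} (hw : w ∈ l)
    (hhead : ∀ h, l.head h ≠ w) (hlast : ∀ h, l.getLast h ≠ w) :
    0 < l.idxOf w ∧ l.idxOf w + 1 < l.length := by
  have hlt := List.idxOf_lt_length_iff.mpr hw
  have hget := List.getElem_idxOf hlt
  have hne : l ≠ [] := List.ne_nil_of_mem hw
  refine ⟨Nat.pos_of_ne_zero fun h0 => hhead hne ?_, ?_⟩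
  · rw [List.head_eq_getElem]
    simp only [← h0, hget]
  · by_contra! hge
    apply hlast hne
    rw [List.getLast_eq_getElem]
    simp only [show l.length - 1 = l.idxOf w by omega, hget]

namespace SubdivisionWitness

variable {V W : Type*} {G : SimpleGraph V} {H : SimpleGraph W} (S : SubdivisionWitness G H)

open Classical in
/-- The vertices of the path replacing `e`, listed from `e.out.1` to `e.out.2`, which fixes one
orientation per edge. -/
noncomputable def edgeSupport (e : Sym2 V) : List W :=
  if h : G.Adj e.out.1 e.out.2 then (S.path h).support else []

lemma edgeSupport_eq_or_eq_reverse {a b : V} (h : G.Adj a b) :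
    S.edgeSupport s(a, b) = (S.path h).support ∨
      S.edgeSupport s(a, b) = (S.path h).support.reverse := by
  have key : ∀ x y (h' : G.Adj x y), s(x, y) = s(a, b) →
      (S.path h').support = (S.path h).support ∨
        (S.path h').support = (S.path h).support.reverse := by
    rintro x y h' hxy
    rcases Sym2.eq_iff.mp hxy with ⟨rfl, rfl⟩ | ⟨rfl, rfl⟩
    · exact Or.inl rfl
    · exact Or.inr (by rw [show h' = h.symm from rfl, S.path_symm, Walk.support_reverse])
  have hout : s((s(a, b)).out.1, (s(a, b)).out.2) = s(a, b) := Quot.out_eq _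
  have hadj : G.Adj (s(a, b)).out.1 (s(a, b)).out.2 := by
    rw [← SimpleGraph.mem_edgeSet, hout]
    exact h
  rw [edgeSupport, dif_pos hadj]
  exact key _ _ hadj hout

lemma mem_edgeSupport_iff {a b : V} (h : G.Adj a b) {w : W} :
    w ∈ S.edgeSupport s(a, b) ↔ w ∈ (S.path h).support := by
  rcases S.edgeSupport_eq_or_eq_reverse h with h' | h' <;> simp [h']

lemma length_edgeSupport {a b : V} (h : G.Adj a b) :
    (S.edgeSupport s(a, b)).length = (S.path h).length + 1 := by
  rcases S.edgeSupport_eq_or_eq_reverse h with h' | h' <;> simp [h']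

lemma nodup_edgeSupport (e : Sym2 V) : (S.edgeSupport e).Nodup := by
  unfold edgeSupport
  split_ifs with h
  · exact (S.path_isPath h).support_nodup
  · exact List.nodup_nil

lemma exists_of_mem_edgeSupport {e : Sym2 V} {w : W} (hw : w ∈ S.edgeSupport e) :
    ∃ a b, ∃ h : G.Adj a b, e = s(a, b) ∧ w ∈ (S.path h).support := by
  unfold edgeSupport at hw
  split_ifs at hw with h
  · exact ⟨_, _, h, (Quot.out_eq e).symm, hw⟩
  · simp at hw

lemma mem_of_emb_mem_edgeSupport {e : Sym2 V} {x : V} (hx : S.emb x ∈ S.edgeSupport e) :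
    x ∈ e := by
  obtain ⟨a, b, h, rfl, hx'⟩ := S.exists_of_mem_edgeSupport hx
  simpa using S.internal_new h x hx'

lemma eq_of_mem_edgeSupport {e e' : Sym2 V} {w : W} (hw : w ∉ Set.range S.emb)
    (he : w ∈ S.edgeSupport e) (he' : w ∈ S.edgeSupport e') : e = e' := by
  obtain ⟨a, b, h, rfl, hw₁⟩ := S.exists_of_mem_edgeSupport he
  obtain ⟨a', b', h', rfl, hw₂⟩ := S.exists_of_mem_edgeSupport he'
  by_contra hne
  exact hw (S.internally_disjoint h h' hne w hw₁ hw₂)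

lemma exists_infix_edgeSupport {w w' : W} (hadj : H.Adj w w') :
    ∃ e, [w, w'] <:+: S.edgeSupport e ∨ [w', w] <:+: S.edgeSupport e := by
  obtain ⟨a, b, h, hf⟩ := S.edge_cover s(w, w') hadj
  refine ⟨s(a, b), ?_⟩
  have := Walk.infix_support_iff_mem_edges.mpr hf
  rcases S.edgeSupport_eq_or_eq_reverse h with h' | h' <;> rw [h']
  · exact this
  · rw [← List.reverse_infix, List.reverse_reverse, ← List.reverse_infix (l₁ := [w', w]),
      List.reverse_reverse]
    simpa [or_comm] using this

lemma mem_edgeSupport_of_adj {e : Sym2 V} {w w' : W} (hw : w ∉ Set.range S.emb)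
    (he : w ∈ S.edgeSupport e) (hadj : H.Adj w w') : w' ∈ S.edgeSupport e := by
  obtain ⟨e', he'⟩ := S.exists_infix_edgeSupport hadj
  have hmem : w ∈ S.edgeSupport e' ∧ w' ∈ S.edgeSupport e' := by
    rcases he' with h | h <;> exact ⟨h.subset (by simp), h.subset (by simp)⟩
  rw [S.eq_of_mem_edgeSupport hw he hmem.1]
  exact hmem.2

lemma mem_edgeSupport_of_chain {v : ℕ → W} {e : Sym2 V} {m n : ℕ}
    (hm : v m ∈ S.edgeSupport e) (hadj : ∀ i, m ≤ i → i < n → H.Adj (v i) (v (i + 1)))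
    (hdiv : ∀ i, m ≤ i → i < n → v i ∉ Set.range S.emb) :
    ∀ i, m ≤ i → i ≤ n → v i ∈ S.edgeSupport e := by
  intro i hmi hin
  induction i, hmi using Nat.le_induction with
  | base => exact hm
  | succ i hmi ih =>
    exact S.mem_edgeSupport_of_adj (hdiv i hmi (by omega)) (ih (by omega)) (hadj i hmi (by omega))

lemma adj_of_chain {v : ℕ → W} {m n : ℕ} {x y : V} (hx : S.emb x = v m) (hy : S.emb y = v n)
    (hmn : m < n) (hadj : ∀ i, m ≤ i → i < n → H.Adj (v i) (v (i + 1)))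
    (hdiv : ∀ i, m < i → i < n → v i ∉ Set.range S.emb) (hxy : x ≠ y) : G.Adj x y := by
  obtain ⟨e, he⟩ := S.exists_infix_edgeSupport (hadj m le_rfl hmn)
  have hmem : v m ∈ S.edgeSupport e ∧ v (m + 1) ∈ S.edgeSupport e := by
    rcases he with h | h <;> exact ⟨h.subset (by simp), h.subset (by simp)⟩
  have hyn := S.mem_edgeSupport_of_chain hmem.2 (fun i hi hin => hadj i (by omega) hin)
    (fun i hi hin => hdiv i (by omega) hin) n hmn le_rfl
  obtain ⟨a, b, h, rfl, -⟩ := S.exists_of_mem_edgeSupport hmem.1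
  have hxe := S.mem_of_emb_mem_edgeSupport (hx ▸ hmem.1)
  have hye := S.mem_of_emb_mem_edgeSupport (hy ▸ hyn)
  rw [Sym2.mem_iff] at hxe hye
  rcases hxe with rfl | rfl <;> rcases hye with rfl | rfl
  exacts [absurd rfl hxy, h, h.symm, absurd rfl hxy]

open Classical in
noncomputable def pos (w : W) : ℕ :=
  if h : ∃ e, w ∈ S.edgeSupport e then (S.edgeSupport h.choose).idxOf w else 0

open Classical in
lemma pos_eq {e : Sym2 V} {w : W} (hw : w ∉ Set.range S.emb) (he : w ∈ S.edgeSupport e) :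
    S.pos w = (S.edgeSupport e).idxOf w := by
  have hex : ∃ e, w ∈ S.edgeSupport e := ⟨e, he⟩
  rw [pos, dif_pos hex, S.eq_of_mem_edgeSupport hw hex.choose_spec he]

lemma pos_bounds {e : Sym2 V} {w : W} (hw : w ∉ Set.range S.emb) (he : w ∈ S.edgeSupport e) :
    0 < S.pos w ∧ S.pos w + 1 < (S.edgeSupport e).length := by
  classical
  rw [S.pos_eq hw he]
  obtain ⟨a, b, h, rfl, -⟩ := S.exists_of_mem_edgeSupport he
  have hend : ∀ x, S.emb x ≠ w := fun x hx => hw ⟨x, hx⟩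
  apply List.idxOf_pos_of_ne he <;>
    rcases S.edgeSupport_eq_or_eq_reverse h with h' | h' <;>
    simp [h', List.head_reverse, List.getLast_reverse, hend]

lemma pos_step {w w' : W} (hw : w ∉ Set.range S.emb) (hw' : w' ∉ Set.range S.emb)
    (hadj : H.Adj w w') : S.pos w' = S.pos w + 1 ∨ S.pos w = S.pos w' + 1 := by
  classical
  obtain ⟨e, he⟩ := S.exists_infix_edgeSupport hadj
  rcases he with h | h <;>
    rw [S.pos_eq hw (h.subset (by simp)), S.pos_eq hw' (h.subset (by simp))]
  · exact Or.inl (List.idxOf_succ_of_infix (S.nodup_edgeSupport e) h)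
  · exact Or.inr (List.idxOf_succ_of_infix (S.nodup_edgeSupport e) h)

lemma eq_of_pos_eq {e : Sym2 V} {w w' : W} (hw : w ∉ Set.range S.emb)
    (hw' : w' ∉ Set.range S.emb) (he : w ∈ S.edgeSupport e) (he' : w' ∈ S.edgeSupport e)
    (h : S.pos w = S.pos w') : w = w' := by
  classical
  rw [S.pos_eq hw he, S.pos_eq hw' he'] at h
  exact (List.idxOf_inj he).mp h

variable {α β : Type*}

/-- For a division vertex `w`, `S.pos w - 1` is the number of division vertices before `w` on
its edge path. -/
noncomputable def coloring (c : V → α) (word : ℕ → β) : W → α ⊕ β :=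
  Function.extend S.emb (Sum.inl ∘ c) fun w => Sum.inr (word (S.pos w - 1))

variable {c : V → α} {word : ℕ → β}

lemma coloring_emb (x : V) : S.coloring c word (S.emb x) = Sum.inl (c x) :=
  S.emb.injective.extend_apply _ _ x

lemma coloring_of_not_mem_range {w : W} (hw : w ∉ Set.range S.emb) :
    S.coloring c word w = Sum.inr (word (S.pos w - 1)) :=
  Function.extend_apply' _ _ _ hw

lemma isLeft_coloring (w : W) : (S.coloring c word w).isLeft ↔ w ∈ Set.range S.emb := by
  by_cases hw : w ∈ Set.range S.emb
  · obtain ⟨x, rfl⟩ := hw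
    simp [coloring_emb]
  · simp [S.coloring_of_not_mem_range hw, hw]

/-- The branch vertices of a repetitive path of `H` form, in order, a repetitive path of `G`. -/
lemma exists_isRepetitivePath_of_mem_range {s : ℕ} {v : ℕ → W}
    (hv : IsRepetitivePath H (S.coloring c word) s v)
    (hbranch : ∃ i < 2 * s, v i ∈ Set.range S.emb) : ∃ r u, IsRepetitivePath G c r u := by
  have hsym : ∀ i < s, v i ∈ Set.range S.emb ↔ v (i + s) ∈ Set.range S.emb := fun i hi => by
    rw [← S.isLeft_coloring (c := c) (word := word), hv.rep i hi, S.isLeft_coloring]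
  obtain ⟨r, hr, q, hq, hqP, hshift, hgap⟩ := exists_enum_of_shift_invariant hsym hbranch
  obtain ⟨-, -, x₀, -⟩ := hbranch
  have : Nonempty V := ⟨x₀⟩
  set u : ℕ → V := fun j => Function.invFun S.emb (v (q j))
  have hu : ∀ j < 2 * r, S.emb (u j) = v (q j) := fun j hj => Function.invFun_eq (hqP j hj).2
  have hinj : ∀ j < 2 * r, ∀ j' < 2 * r, j ≠ j' → u j ≠ u j' := fun j hj j' hj' hne heq =>
    hv.injOn _ (hqP j hj).1 _ (hqP j' hj').1 (hq.injective.ne hne)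
      (by rw [← hu j hj, ← hu j' hj', heq])
  refine ⟨r, u, hr, hinj, fun j hj => ?_, fun j hj => ?_⟩
  · have hlt := (hqP (j + 1) hj).1
    exact S.adj_of_chain (hu j (by omega)) (hu (j + 1) hj) (hq (Nat.lt_succ_self j))
      (fun i _ hi => hv.adj i (by omega)) (fun i hi hi' => hgap j i hi hi' (by omega))
      (hinj j (by omega) (j + 1) hj (by omega))
  · have hqj : q j < s := by
      have := (hqP (j + r) (by omega)).1
      rw [hshift] at this
      omega
    have := hv.rep (q j) hqj
    rwa [← hshift, ← hu j (by omega), ← hu (j + r) (by omega), S.coloring_emb, S.coloring_emb,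
      Sum.inl.injEq] at this

/-- A repetitive path of `H` through division vertices only runs inside one edge path, where
its colours read a square of `word`. -/
lemma exists_not_squareFreeOn {s : ℕ} {v : ℕ → W}
    (hv : IsRepetitivePath H (S.coloring c word) s v)
    (hdiv : ∀ i < 2 * s, v i ∉ Set.range S.emb) :
    ∃ a b, ∃ h : G.Adj a b, ¬ SquareFreeOn word ((S.path h).length - 1) := by
  have hs := hv.half_pos
  obtain ⟨a, b, h, hv₀⟩ := (S.vert_cover (v 0)).resolve_left (hdiv 0 (by omega))
  refine ⟨a, b, h, fun hword => ?_⟩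
  have hmem : ∀ i < 2 * s, v i ∈ S.edgeSupport s(a, b) := fun i hi =>
    S.mem_edgeSupport_of_chain (n := 2 * s - 1) ((S.mem_edgeSupport_iff h).mpr hv₀)
      (fun j _ hj => hv.adj j (by omega)) (fun j _ hj => hdiv j (by omega)) i (Nat.zero_le _)
      (by omega)
  have hbound : ∀ i < 2 * s, 0 < S.pos (v i) ∧ S.pos (v i) < (S.path h).length := fun i hi => by
    have := S.pos_bounds (hdiv i hi) (hmem i hi)
    rw [S.length_edgeSupport h] at this
    omega
  obtain ⟨i, hi, hne⟩ := hword.exists_ne_of_step hs (u := fun i => S.pos (v i) - 1)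
    (fun i hi => by
      have := S.pos_step (hdiv i (by omega)) (hdiv (i + 1) hi) (hv.adj i hi)
      have := hbound i (by omega)
      have := hbound (i + 1) hi
      omega)
    (fun i hi j hj hij => by
      by_contra hne
      have := hbound i hi
      have := hbound j hj
      exact hv.injOn i hi j hj hne
        (S.eq_of_pos_eq (hdiv i hi) (hdiv j hj) (hmem i hi) (hmem j hj) (by omega)))
    (fun i hi => by have := hbound i hi; omega)
  have := hv.rep i hi
  rw [S.coloring_of_not_mem_range (hdiv i (by omega)),
    S.coloring_of_not_mem_range (hdiv (i + s) (by omega)), Sum.inr.injEq] at this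
  exact hne this

theorem nonRepColoring_coloring (hc : NonRepColoring G c)
    (hword : ∀ a b (h : G.Adj a b), SquareFreeOn word ((S.path h).length - 1)) :
    NonRepColoring H (S.coloring c word) := by
  rw [nonRepColoring_iff] at hc ⊢
  intro s v hv
  by_cases hbranch : ∃ i < 2 * s, v i ∈ Set.range S.emb
  · obtain ⟨r, u, hu⟩ := S.exists_isRepetitivePath_of_mem_range hv hbranch
    exact hc r u hu
  · simp only [not_exists, not_and] at hbranch
    obtain ⟨a, b, h, hsq⟩ := S.exists_not_squareFreeOn hv hbranch
    exact hsq (hword a b h)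

theorem piNum_le_add [Finite V] {m : ℕ} (word : ℕ → Fin m)
    (hword : ∀ a b (h : G.Adj a b), SquareFreeOn word ((S.path h).length - 1)) :
    piNum H ≤ piNum G + m := by
  obtain ⟨c, hc⟩ := exists_nonRepColoring_fin_piNum G
  exact piNum_le_of_nonRepColoring
    ((S.nonRepColoring_coloring hc hword).comp_injective finSumFinEquiv.injective)

end SubdivisionWitness

theorem stmt_12_general {V W : Type*} [Fintype V]
    (G : SimpleGraph V) (H : SimpleGraph W) :
    (IsLESubdivision 1 G H → piNum H ≤ piNum G + 1) ∧
    (IsLESubdivision 2 G H → piNum H ≤ piNum G + 2) ∧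
    (IsSubdivision G H → piNum H ≤ piNum G + 3) := by
  refine ⟨fun ⟨S, hlen⟩ => ?_, fun ⟨S, hlen⟩ => ?_, fun ⟨S⟩ => ?_⟩
  · refine S.piNum_le_add (fun _ => 0) fun a b h n s hs hns => ?_
    have := hlen h
    omega
  · refine S.piNum_le_add (Fin.ofNat 2) fun a b h n s hs hns => ⟨0, hs, ?_⟩
    have := hlen h
    obtain ⟨rfl, rfl⟩ : n = 0 ∧ s = 1 := by omega
    decide
  · exact S.piNum_le_add ternaryThueMorse fun _ _ _ => squareFreeOn_ternaryThueMorse _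

/-- For every graph `G`: (a) `π(H) ≤ π(G) + 1` for every `(≤1)`-subdivision
`H` of `G`; (b) `π(H) ≤ π(G) + 2` for every `(≤2)`-subdivision `H` of `G`;
(c) `π(H) ≤ π(G) + 3` for every subdivision `H` of `G`. -/
theorem stmt_12 {V W : Type*} [Fintype V] [Fintype W]
    (G : SimpleGraph V) (H : SimpleGraph W) :
    (IsLESubdivision 1 G H → piNum H ≤ piNum G + 1) ∧
    (IsLESubdivision 2 G H → piNum H ≤ piNum G + 2) ∧
    (IsSubdivision G H → piNum H ≤ piNum G + 3) :=
  stmt_12_general G H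
end
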